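/- arXiv:1010.3536 — 2 statements merged into one kernel-verified Lean document; each statement's English description precedes it below -/
import Mathlib

section
/- Let H be an imprimitive permutation group on a finite set Ω with a minimal block of imprimitivity Δ ⊆ Ω; put K = H^Δ_Δ, d = |Δ|, n = |Ω|, and let L be the permutation group induced by H on the system of blocks {Δ^h : h ∈ H}, a set of size s = n/d. Suppose that (i) K is a relation group on Δ and has a regular set of size r_Δ with 2·r_Δ ≠ d, and (ii) L is a relation group on the s blocks and has a regular set. Then every subgroup of H is a relation group on Ω. -/
open Pointwise MulAction

/-- The invariance group `G(R)` of an unordered relation `R` on `Ω`: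
all permutations `g` such that `x ∈ R` implies `g • x ∈ R`. -/
def invGroup {Ω : Type*} [Fintype Ω] [DecidableEq Ω] (R : Set (Finset Ω)) :
    Subgroup (Equiv.Perm Ω) where
  carrier := {g | ∀ x ∈ R, g • x ∈ R}
  one_mem' := fun x hx => by simpa using hx
  mul_mem' := fun ha hb x hx => by rw [mul_smul]; exact ha _ (hb _ hx)
  inv_mem' := by
    intro g hg x hx
    have himg : (fun y : Finset _ => g • y) '' R ⊆ R := by
      rintro - ⟨y, hy, rfl⟩; exact hg y hy
    have heq : (fun y : Finset _ => g • y) '' R = R := by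
      apply Set.eq_of_subset_of_ncard_le himg _ (Set.toFinite R)
      rw [Set.ncard_image_of_injective _ (MulAction.injective g)]
    rw [← heq] at hx
    obtain ⟨y, hy, hxy⟩ := hx
    have : g⁻¹ • x = y := by rw [← hxy]; simp
    rwa [this]

/-- A permutation group on `Ω` is a relation group if it is the invariance group
of some unordered relation on `Ω`. -/
def IsRelationGroup {Ω : Type*} [Fintype Ω] [DecidableEq Ω]
    (G : Subgroup (Equiv.Perm Ω)) : Prop :=
  ∃ R : Set (Finset Ω), G = invGroup R

/-- `w` is a regular set for `G`: only the identity of `G` stabilizes `w` setwise. -/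
def IsRegularSet {Ω : Type*} [DecidableEq Ω] (G : Subgroup (Equiv.Perm Ω))
    (w : Finset Ω) : Prop :=
  ∀ g ∈ G, g • w = w → g = 1

/-- The arity of a relation: the set of cardinalities of its members. -/
def arity {Ω : Type*} (R : Set (Finset Ω)) : Set ℕ := {n | ∃ x ∈ R, x.card = n}

/-- `G` is orbit closed: every permutation mapping each finite subset into its
`G`-orbit already lies in `G`. -/
def IsOrbitClosed {Ω : Type*} [DecidableEq Ω] (G : Subgroup (Equiv.Perm Ω)) : Prop :=
  ∀ g : Equiv.Perm Ω, (∀ x : Finset Ω, ∃ h ∈ G, g • x = h • x) → g ∈ G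

/-- `G` is set-transitive: transitive on `k`-element subsets for every `k`. -/
def IsSetTransitive {Ω : Type*} [DecidableEq Ω] (G : Subgroup (Equiv.Perm Ω)) : Prop :=
  ∀ x y : Finset Ω, x.card = y.card → ∃ g ∈ G, g • x = y

/-- A permutation group is primitive if it is transitive and every block of the
action is trivial (a subsingleton or the whole set). -/
def IsPrimitivePermGroup {Ω : Type*} (G : Subgroup (Equiv.Perm Ω)) : Prop :=
  MulAction.IsPretransitive ↥G Ω ∧
    ∀ B : Set Ω, MulAction.IsBlock ↥G B → B.Subsingleton ∨ B = Set.univ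

/-- Restriction of the setwise stabilizer of a finite set `Δ` to a permutation group on `Δ`. -/
def restrictHom {Ω : Type*} [DecidableEq Ω] (Δ : Finset Ω) :
    ↥(MulAction.stabilizer (Equiv.Perm Ω) Δ) →* Equiv.Perm {x // x ∈ Δ} where
  toFun h := Equiv.Perm.subtypePerm h.1 (fun x => by
    constructor
    · intro hx
      have h2 : h.1 • x ∈ h.1 • Δ := by rw [h.2]; exact hx
      exact (Finset.smul_mem_smul_finset_iff h.1).mp h2
    · intro hx
      have := Finset.smul_mem_smul_finset (a := h.1) hx
      rwa [h.2] at this)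
  map_one' := rfl
  map_mul' _ _ := rfl

/-- The group `H^Δ_Δ` induced on `Δ` by the setwise stabilizer of `Δ` in `H`. -/
def inducedGroup {Ω : Type*} [DecidableEq Ω] (H : Subgroup (Equiv.Perm Ω)) (Δ : Finset Ω) :
    Subgroup (Equiv.Perm {x // x ∈ Δ}) :=
  Subgroup.map (restrictHom Δ)
    ((H ⊓ MulAction.stabilizer (Equiv.Perm Ω) Δ).subgroupOf
      (MulAction.stabilizer (Equiv.Perm Ω) Δ))

/-- A `Fintype` instance for subsets of a finite type. -/
noncomputable instance (priority := low) {α : Type*} [Finite α] (s : Set α) :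
    Fintype ↥s :=
  (Set.toFinite s).fintype

/-!
The relation consists of three families of pairwise distinct sizes: the sets `insert p γ` with
`γ` a block and `p ∉ γ` (size `d + 1`), the `H`-translates of the members of sizes
`2, …, d - 2` of a relation for `K` (as `K` is transitive, its other layers are empty or full),
and the unions of blocks indexed by a relation for `L`. Its invariance group `M` contains `H`,
and its elements permute the blocks through `L` and act on each block they fix through `K`.
Let `W` meet each block `c • Δ` (`c ∈ H` a chosen representative) in `c • wΔ` or in its
complement, according as the block lies in a regular set of `L` or not. As `2 |wΔ| ≠ d`, an
element of `M` fixing `W` fixes that regular set, hence every block, and then fixes `wΔ` in each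
block: `W` is regular for `M`. Adding the `G`-orbit of `W` then cuts `M` down to `G`, provided
the new members cannot be confused with the old ones: `W` is not a union of blocks, and after
passing to the complementary regular set of `L` if necessary, `|W|` avoids the sizes `d + 1`
and `2, …, d - 2`.
-/

open Equiv MulAction
open Function (Embedding)

lemma Nat.not_dvd_self_add_one {d : ℕ} (hd : 2 ≤ d) : ¬ d ∣ d + 1 := fun h =>
  absurd (Nat.le_of_dvd one_pos (Nat.dvd_add_self_left.1 h)) (by omega)

lemma Finset.smul_finset_compl {G β : Type*} [Group G] [MulAction G β] [Fintype β]
    [DecidableEq β] (g : G) (s : Finset β) : g • sᶜ = (g • s)ᶜ := by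
  rw [compl_eq_univ_sdiff, compl_eq_univ_sdiff, smul_finset_sdiff, smul_finset_univ]

lemma Finset.perm_smul_eq_self_of_forall {α : Type*} [DecidableEq α] {σ : Perm α}
    {s : Finset α} (h : ∀ a, σ a ∈ s ↔ a ∈ s) : σ • s = s := by
  ext a
  rw [← inv_smul_mem_iff, ← h, Perm.smul_def, Perm.coe_inv, Equiv.apply_symm_apply]

lemma ne_bot_of_forall_exists_apply_eq {α : Type*} [Fintype α] {G : Subgroup (Perm α)}
    (hG : ∀ a b : α, ∃ k ∈ G, k a = b) (hα : 1 < Fintype.card α) : G ≠ ⊥ := by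
  obtain ⟨a, b, hab⟩ := Fintype.exists_pair_of_one_lt_card hα
  obtain ⟨k, hk, hkab⟩ := hG a b
  exact fun h => hab (by rw [← hkab, (Subgroup.eq_bot_iff_forall _).1 h k hk, Perm.one_apply])

section Relations

variable {α : Type*} [DecidableEq α]

lemma IsRegularSet.ne_empty {G : Subgroup (Perm α)} {w : Finset α} (hw : IsRegularSet G w)
    (hG : G ≠ ⊥) : w ≠ ∅ := by
  rintro rfl
  exact hG ((Subgroup.eq_bot_iff_forall G).2 fun g hg => hw g hg (Finset.smul_finset_empty g))

lemma exists_smul_eq_smul_of_card_le_one {G : Subgroup (Perm α)}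
    (hG : ∀ a b : α, ∃ k ∈ G, k a = b) (g : Perm α) {x : Finset α} (hx : x.card ≤ 1) :
    ∃ k ∈ G, k • x = g • x := by
  obtain h | h : x.card = 0 ∨ x.card = 1 := by omega
  · rw [Finset.card_eq_zero.1 h]
    exact ⟨1, G.one_mem, by simp⟩
  · obtain ⟨a, rfl⟩ := Finset.card_eq_one.1 h
    obtain ⟨k, hk, hka⟩ := hG a (g a)
    exact ⟨k, hk, by simp [Finset.smul_finset_singleton, Perm.smul_def, hka]⟩

variable [Fintype α]

lemma IsRegularSet.compl {G : Subgroup (Perm α)} {w : Finset α} (hw : IsRegularSet G w) :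
    IsRegularSet G wᶜ :=
  fun g hg hgw => hw g hg (compl_injective (by rw [← Finset.smul_finset_compl, hgw]))

lemma IsRegularSet.ne_univ {G : Subgroup (Perm α)} {w : Finset α} (hw : IsRegularSet G w)
    (hG : G ≠ ⊥) : w ≠ Finset.univ := by
  rintro rfl
  exact hG ((Subgroup.eq_bot_iff_forall G).2 fun g hg => hw g hg Finset.smul_finset_univ)

lemma inf_invGroup_le_invGroup_union (R₁ R₂ : Set (Finset α)) :
    invGroup R₁ ⊓ invGroup R₂ ≤ invGroup (R₁ ∪ R₂) := by
  rintro g ⟨h₁, h₂⟩ x (hx | hx)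
  exacts [Or.inl (h₁ x hx), Or.inr (h₂ x hx)]

lemma invGroup_le_invGroup_of_arity {R R' : Set (Finset α)} (hsub : R' ⊆ R)
    (hlayer : ∀ x ∈ R, x.card ∈ arity R' → x ∈ R') : invGroup R ≤ invGroup R' :=
  fun g hg x hx => hlayer _ (hg x (hsub hx)) ⟨x, hx, (Finset.card_smul_finset g x).symm⟩

/-- By transitivity, the layers of `R` of sizes `0`, `1`, `|α| - 1` and `|α|` are empty or
full. -/
theorem invGroup_sep_card_eq_invGroup {R : Set (Finset α)}
    (hR : ∀ a b : α, ∃ k ∈ invGroup R, k a = b) :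
    invGroup {x ∈ R | 2 ≤ x.card ∧ x.card + 2 ≤ Fintype.card α} = invGroup R := by
  refine le_antisymm (fun g hg x hx => ?_) (invGroup_le_invGroup_of_arity (fun x hx => hx.1) ?_)
  · by_cases hcard : 2 ≤ x.card ∧ x.card + 2 ≤ Fintype.card α
    · exact (hg x ⟨hx, hcard⟩).1
    obtain ⟨k, hk, hkx⟩ : ∃ k ∈ invGroup R, k • x = g • x := by
      rcases Nat.lt_or_ge x.card 2 with hsmall | hlarge
      · exact exists_smul_eq_smul_of_card_le_one hR g (by omega)
      · obtain ⟨k, hk, hkx⟩ := exists_smul_eq_smul_of_card_le_one hR g (x := xᶜ)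
          (by rw [Finset.card_compl]; omega)
        refine ⟨k, hk, compl_injective ?_⟩
        rw [← Finset.smul_finset_compl, ← Finset.smul_finset_compl, hkx]
    exact hkx ▸ hk x hx
  · rintro x hx ⟨y, hy, hxy⟩
    exact ⟨hx, hxy ▸ hy.2⟩

theorem eq_invGroup_union_orbit {R₀ P : Set (Finset α)} {G : Subgroup (Perm α)} {W : Finset α}
    (hG : G ≤ invGroup R₀) (hW : IsRegularSet (invGroup R₀) W) (hR₀P : R₀ ⊆ P) (hWP : W ∉ P)
    (hP : invGroup (R₀ ∪ orbit G W) ≤ invGroup P) :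
    G = invGroup (R₀ ∪ orbit G W) := by
  have hGR : G ≤ invGroup (R₀ ∪ orbit G W) := by
    rintro a ha z (hz | ⟨b, rfl⟩)
    · exact Or.inl (hG ha z hz)
    · exact Or.inr ⟨⟨a, ha⟩ * b, mul_smul _ _ _⟩
  have hnotP : ∀ g ∈ invGroup (R₀ ∪ orbit G W), g • W ∉ P := fun g hg hgW =>
    hWP (by simpa using hP ((invGroup _).inv_mem hg) _ hgW)
  refine le_antisymm hGR fun g hg => ?_
  have hgR₀ : g ∈ invGroup R₀ := by
    intro z hz
    obtain hgz | ⟨a, ha⟩ := hg z (Or.inl hz)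
    · exact hgz
    · change (a : Perm α) • W = g • z at ha
      exact absurd (ha ▸ hP hg z (hR₀P hz)) (hnotP a (hGR a.2))
  obtain hgW | ⟨a, ha⟩ := hg W (Or.inr (mem_orbit_self W))
  · exact absurd (hR₀P hgW) (hnotP g hg)
  change (a : Perm α) • W = g • W at ha
  have hag : (a : Perm α)⁻¹ * g = 1 :=
    hW _ ((invGroup R₀).mul_mem ((invGroup R₀).inv_mem (hG a.2)) hgR₀)
      (by rw [mul_smul, ← ha, inv_smul_smul])
  rw [inv_mul_eq_one] at hag
  exact hag ▸ a.2

end Relations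

section Partition

variable {Ω : Type*} {𝔅 : Set (Finset Ω)}

def IsFinsetPartition (𝔅 : Set (Finset Ω)) : Prop :=
  ∀ ω, ∃! γ : 𝔅, ω ∈ (γ : Finset Ω)

noncomputable def blockOf (h𝔅 : IsFinsetPartition 𝔅) (ω : Ω) : 𝔅 :=
  (h𝔅 ω).exists.choose

lemma mem_blockOf (h𝔅 : IsFinsetPartition 𝔅) (ω : Ω) : ω ∈ (blockOf h𝔅 ω : Finset Ω) :=
  (h𝔅 ω).exists.choose_spec

lemma blockOf_eq_iff (h𝔅 : IsFinsetPartition 𝔅) {ω : Ω} {γ : 𝔅} :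
    blockOf h𝔅 ω = γ ↔ ω ∈ (γ : Finset Ω) :=
  ⟨fun h => h ▸ mem_blockOf h𝔅 ω, fun h => (h𝔅 ω).unique (mem_blockOf h𝔅 ω) h⟩

lemma IsFinsetPartition.eq_of_mem_of_mem (h𝔅 : IsFinsetPartition 𝔅) {γ γ' : Finset Ω}
    (hγ : γ ∈ 𝔅) (hγ' : γ' ∈ 𝔅) {ω : Ω} (hω : ω ∈ γ) (hω' : ω ∈ γ') : γ = γ' :=
  congrArg Subtype.val ((h𝔅 ω).unique (y₁ := ⟨γ, hγ⟩) (y₂ := ⟨γ', hγ'⟩) hω hω')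

variable [DecidableEq Ω]

lemma blockOf_apply (h𝔅 : IsFinsetPartition 𝔅) {g : Perm Ω} {p : Perm 𝔅}
    (hp : ∀ γ, (p γ : Finset Ω) = g • (γ : Finset Ω)) (ω : Ω) :
    blockOf h𝔅 (g ω) = p (blockOf h𝔅 ω) := by
  rw [blockOf_eq_iff, hp, ← Perm.smul_def, Finset.smul_mem_smul_finset_iff]
  exact mem_blockOf h𝔅 ω

def blockPlusPoint (𝔅 : Set (Finset Ω)) : Set (Finset Ω) :=
  {z | ∃ γ ∈ 𝔅, ∃ p ∉ γ, z = insert p γ}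

lemma card_of_mem_blockPlusPoint {d : ℕ} (hcard : ∀ γ ∈ 𝔅, γ.card = d) {z : Finset Ω}
    (hz : z ∈ blockPlusPoint 𝔅) : z.card = d + 1 := by
  obtain ⟨γ, hγ, p, hp, rfl⟩ := hz
  rw [Finset.card_insert_of_notMem hp, hcard γ hγ]

variable [Fintype Ω]

def blockPerm {g : Perm Ω} (hg : g ∈ invGroup 𝔅) : Perm 𝔅 :=
  (MulAction.toPerm g : Perm (Finset Ω)).subtypePerm fun x =>
    ⟨fun h => by simpa using (invGroup 𝔅).inv_mem hg _ h, hg x⟩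

@[simp]
lemma coe_blockPerm_apply {g : Perm Ω} (hg : g ∈ invGroup 𝔅) (γ : 𝔅) :
    (blockPerm hg γ : Finset Ω) = g • (γ : Finset Ω) :=
  rfl

noncomputable def blockUnion (h𝔅 : IsFinsetPartition 𝔅) (t : Finset 𝔅) : Finset Ω :=
  {ω | blockOf h𝔅 ω ∈ t}

@[simp]
lemma mem_blockUnion {h𝔅 : IsFinsetPartition 𝔅} {t : Finset 𝔅} {ω : Ω} :
    ω ∈ blockUnion h𝔅 t ↔ blockOf h𝔅 ω ∈ t := by
  simp [blockUnion]

lemma card_blockUnion (h𝔅 : IsFinsetPartition 𝔅) {d : ℕ} (hcard : ∀ γ ∈ 𝔅, γ.card = d)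
    (t : Finset 𝔅) : (blockUnion h𝔅 t).card = t.card * d := by
  rw [Finset.card_eq_sum_card_fiberwise (f := blockOf h𝔅) (t := t)
    fun ω hω => mem_blockUnion.1 hω, Finset.sum_const_nat fun γ hγ => ?_]
  rw [← hcard γ γ.2]
  congr 1
  ext ω
  simp only [Finset.mem_filter, mem_blockUnion, blockOf_eq_iff]
  exact ⟨And.right, fun h => ⟨(blockOf_eq_iff h𝔅).2 h ▸ hγ, h⟩⟩

lemma IsFinsetPartition.card_eq_card_mul (h𝔅 : IsFinsetPartition 𝔅) {d : ℕ}
    (hcard : ∀ γ ∈ 𝔅, γ.card = d) : Fintype.card Ω = Fintype.card 𝔅 * d := by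
  rw [← Finset.card_univ, ← Finset.card_univ, ← card_blockUnion h𝔅 hcard]
  congr 1
  ext ω
  simp

lemma blockUnion_injective (h𝔅 : IsFinsetPartition 𝔅) (hne : ∀ γ ∈ 𝔅, γ.Nonempty) :
    Function.Injective (blockUnion h𝔅) := by
  intro t t' h
  ext γ
  obtain ⟨ω, hω⟩ := hne γ γ.2
  rw [← (blockOf_eq_iff h𝔅).2 hω, ← mem_blockUnion, h, mem_blockUnion]

lemma smul_blockUnion (h𝔅 : IsFinsetPartition 𝔅) {g : Perm Ω} {p : Perm 𝔅}
    (hp : ∀ γ, (p γ : Finset Ω) = g • (γ : Finset Ω)) (t : Finset 𝔅) :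
    g • blockUnion h𝔅 t = blockUnion h𝔅 (p • t) := by
  ext ω
  obtain ⟨ω, rfl⟩ := g.surjective ω
  rw [← Finset.inv_smul_mem_iff, mem_blockUnion, mem_blockUnion, ← Finset.inv_smul_mem_iff,
    blockOf_apply h𝔅 hp]
  simp [Perm.smul_def]

lemma mem_invGroup_image_blockUnion_iff (h𝔅 : IsFinsetPartition 𝔅) (hne : ∀ γ ∈ 𝔅, γ.Nonempty)
    {g : Perm Ω} {p : Perm 𝔅} (hp : ∀ γ, (p γ : Finset Ω) = g • (γ : Finset Ω))
    {RL : Set (Finset 𝔅)} : g ∈ invGroup (blockUnion h𝔅 '' RL) ↔ p ∈ invGroup RL := by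
  constructor
  · intro hg t ht
    obtain ⟨t', ht', he⟩ := hg _ ⟨t, ht, rfl⟩
    rw [smul_blockUnion h𝔅 hp] at he
    exact blockUnion_injective h𝔅 hne he ▸ ht'
  · rintro hpRL _ ⟨t, ht, rfl⟩
    exact ⟨p • t, hpRL t ht, (smul_blockUnion h𝔅 hp t).symm⟩

lemma invGroup_le_invGroup_range_blockUnion (h𝔅 : IsFinsetPartition 𝔅) :
    invGroup 𝔅 ≤ invGroup (Set.range (blockUnion h𝔅)) := by
  rintro g hg _ ⟨t, rfl⟩
  exact ⟨blockPerm hg • t, (smul_blockUnion h𝔅 (coe_blockPerm_apply hg) t).symm⟩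

/-- `g • γ` is the intersection of the images of two sets `insert pᵢ γ`; were these built on
different blocks, it would have at most two points. -/
theorem invGroup_blockPlusPoint_le (h𝔅 : IsFinsetPartition 𝔅) {d : ℕ}
    (hcard : ∀ γ ∈ 𝔅, γ.card = d) (hd : 3 ≤ d) (hn : d + 2 ≤ Fintype.card Ω) :
    invGroup (blockPlusPoint 𝔅) ≤ invGroup 𝔅 := by
  intro g hg γ hγ
  obtain ⟨p₁, hp₁, p₂, hp₂, hne⟩ : ∃ p₁ ∉ γ, ∃ p₂ ∉ γ, p₁ ≠ p₂ := by
    have : 1 < γᶜ.card := by rw [Finset.card_compl, hcard γ hγ]; omega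
    obtain ⟨p₁, h₁, p₂, h₂, hne⟩ := Finset.one_lt_card.1 this
    exact ⟨p₁, Finset.mem_compl.1 h₁, p₂, Finset.mem_compl.1 h₂, hne⟩
  obtain ⟨γ₁, hγ₁, q₁, -, h₁⟩ := hg _ ⟨γ, hγ, p₁, hp₁, rfl⟩
  obtain ⟨γ₂, hγ₂, q₂, -, h₂⟩ := hg _ ⟨γ, hγ, p₂, hp₂, rfl⟩
  have hinter : g • γ = insert q₁ γ₁ ∩ insert q₂ γ₂ := by
    rw [← h₁, ← h₂, ← Finset.smul_finset_inter,
      Finset.insert_inter_of_notMem (by simp [hne, hp₁]), Finset.inter_insert_of_notMem hp₂,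
      Finset.inter_self]
  have hcard_g : (g • γ).card = d := by rw [Finset.card_smul_finset, hcard γ hγ]
  by_cases h : γ₁ = γ₂
  · subst h
    have hsub : γ₁ ⊆ g • γ :=
      hinter ▸ Finset.subset_inter (Finset.subset_insert _ _) (Finset.subset_insert _ _)
    rwa [← Finset.eq_of_subset_of_card_le hsub (by rw [hcard_g, hcard γ₁ hγ₁])]
  · have hsub : g • γ ⊆ {q₁, q₂} := by
      rw [hinter]
      intro ω hω
      simp only [Finset.mem_inter, Finset.mem_insert, Finset.mem_singleton] at hω ⊢
      rcases hω with ⟨h₁ | h₁, h₂ | h₂⟩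
      exacts [Or.inl h₁, Or.inl h₁, Or.inr h₂, absurd (h𝔅.eq_of_mem_of_mem hγ₁ hγ₂ h₁ h₂) h]
    have := (Finset.card_le_card hsub).trans Finset.card_le_two
    omega

end Partition

section BlockSystem

variable {Ω : Type*} [DecidableEq Ω] {H : Subgroup (Perm Ω)} {Δ : Finset Ω}

lemma isFinsetPartition_orbit (htrans : IsPretransitive H Ω) (hblock : IsBlock H (Δ : Set Ω))
    (hΔ : Δ.Nonempty) : IsFinsetPartition (orbit H Δ) := by
  intro ω
  obtain ⟨δ, hδ⟩ := hΔ
  obtain ⟨h, rfl⟩ := htrans.exists_smul_eq δ ω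
  refine ⟨⟨h • Δ, mem_orbit Δ h⟩, Finset.smul_mem_smul_finset hδ, ?_⟩
  rintro ⟨_, h', rfl⟩ hω
  refine Subtype.ext (Finset.coe_injective ?_)
  simp only [Finset.coe_smul_finset]
  refine hblock.smul_eq_smul_of_nonempty ⟨h • δ, ?_, ?_⟩
  · simpa [← Finset.coe_smul_finset] using hω
  · simpa [← Finset.coe_smul_finset] using Finset.smul_mem_smul_finset (a := h) hδ

lemma card_of_mem_orbit {γ : Finset Ω} (hγ : γ ∈ orbit H Δ) : γ.card = Δ.card := by
  obtain ⟨h, rfl⟩ := hγ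
  exact Finset.card_smul_finset _ _

lemma nonempty_of_mem_orbit (hΔ : Δ.Nonempty) {γ : Finset Ω} (hγ : γ ∈ orbit H Δ) :
    γ.Nonempty := by
  obtain ⟨h, rfl⟩ := hγ
  exact hΔ.smul_finset

noncomputable def blockRep (γ : orbit H Δ) : H :=
  (mem_orbit_iff.1 γ.2).choose

lemma blockRep_smul (γ : orbit H Δ) : (blockRep γ : Perm Ω) • Δ = γ :=
  (mem_orbit_iff.1 γ.2).choose_spec

lemma blockOf_blockRep_apply (h𝔅 : IsFinsetPartition (orbit H Δ)) (γ : orbit H Δ) (δ : Δ) :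
    blockOf h𝔅 ((blockRep γ : Perm Ω) δ) = γ := by
  rw [blockOf_eq_iff, ← blockRep_smul γ]
  exact Finset.smul_mem_smul_finset δ.2

lemma restrictHom_mem_inducedGroup {h : Perm Ω} (hh : h ∈ H)
    (hΔ : h ∈ stabilizer (Perm Ω) Δ) : restrictHom Δ ⟨h, hΔ⟩ ∈ inducedGroup H Δ :=
  Subgroup.mem_map.2 ⟨⟨h, hΔ⟩, Subgroup.mem_subgroupOf.2 ⟨hh, hΔ⟩, rfl⟩

@[simp]
lemma coe_restrictHom_apply (τ : stabilizer (Perm Ω) Δ) (δ : Δ) :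
    (restrictHom Δ τ δ : Ω) = (τ : Perm Ω) δ :=
  rfl

lemma smul_map_subtype (τ : stabilizer (Perm Ω) Δ) (x : Finset Δ) :
    (τ : Perm Ω) • x.map (Embedding.subtype (· ∈ Δ)) =
      (restrictHom Δ τ • x).map (Embedding.subtype (· ∈ Δ)) := by
  simp only [Finset.smul_finset_def, Finset.map_eq_image, Finset.image_image]
  rfl

def liftedTranslates (H : Subgroup (Perm Ω)) (Δ : Finset Ω) (S : Set (Finset Δ)) :
    Set (Finset Ω) :=
  {z | ∃ h ∈ H, ∃ x ∈ S, z = h • x.map (Embedding.subtype (· ∈ Δ))}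

lemma card_of_mem_liftedTranslates {S : Set (Finset Δ)} {z : Finset Ω}
    (hz : z ∈ liftedTranslates H Δ S) : ∃ x ∈ S, z.card = x.card := by
  obtain ⟨h, -, x, hx, rfl⟩ := hz
  exact ⟨x, hx, by rw [Finset.card_smul_finset, Finset.card_map]⟩

variable [Fintype Ω]

lemma le_invGroup_orbit : H ≤ invGroup (orbit H Δ) := by
  rintro h hh _ ⟨c, rfl⟩
  exact ⟨⟨h, hh⟩ * c, mul_smul _ _ _⟩

lemma smul_eq_of_mem_of_mem (h𝔅 : IsFinsetPartition (orbit H Δ)) {h : Perm Ω} (hh : h ∈ H)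
    {ω : Ω} (hω : ω ∈ Δ) (hhω : ω ∈ h • Δ) : h • Δ = Δ :=
  h𝔅.eq_of_mem_of_mem (le_invGroup_orbit hh _ (mem_orbit_self Δ)) (mem_orbit_self Δ) hhω hω

lemma exists_mem_inducedGroup_apply_eq (h𝔅 : IsFinsetPartition (orbit H Δ))
    (htrans : IsPretransitive H Ω) (a b : Δ) : ∃ σ ∈ inducedGroup H Δ, σ a = b := by
  obtain ⟨⟨h, hh⟩, hab⟩ := htrans.exists_smul_eq (a : Ω) b
  have hΔ : h ∈ stabilizer (Perm Ω) Δ :=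
    smul_eq_of_mem_of_mem h𝔅 hh b.2 (hab ▸ Finset.smul_mem_smul_finset a.2)
  exact ⟨_, restrictHom_mem_inducedGroup hh hΔ, Subtype.ext hab⟩

lemma card_eq_two_mul_or_three_mul_le (h𝔅 : IsFinsetPartition (orbit H Δ))
    (hn : Δ.card < Fintype.card Ω) :
    Fintype.card Ω = 2 * Δ.card ∨ 3 * Δ.card ≤ Fintype.card Ω := by
  have hcard := h𝔅.card_eq_card_mul fun _ => card_of_mem_orbit
  rcases Nat.lt_or_ge (Fintype.card (orbit H Δ)) 3 with h | h
  · left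
    have : Fintype.card (orbit H Δ) = 2 := by
      by_contra h'
      interval_cases hs : Fintype.card (orbit H Δ) <;> omega
    rw [hcard, this]
  · exact Or.inr (hcard ▸ Nat.mul_le_mul_right _ h)

end BlockSystem

section Construction

variable {Ω : Type*} [Fintype Ω] [DecidableEq Ω] {H : Subgroup (Perm Ω)} {Δ : Finset Ω}

lemma le_invGroup_liftedTranslates (S : Set (Finset Δ)) :
    H ≤ invGroup (liftedTranslates H Δ S) := by
  rintro h hh _ ⟨h', hh', x, hx, rfl⟩
  exact ⟨h * h', H.mul_mem hh hh', x, hx, (mul_smul _ _ _).symm⟩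

theorem restrictHom_mem_invGroup (h𝔅 : IsFinsetPartition (orbit H Δ)) {S : Set (Finset Δ)}
    (hSne : ∀ x ∈ S, x.Nonempty) (hKS : inducedGroup H Δ ≤ invGroup S)
    {τ : stabilizer (Perm Ω) Δ} (hτ : (τ : Perm Ω) ∈ invGroup (liftedTranslates H Δ S)) :
    restrictHom Δ τ ∈ invGroup S := by
  intro x hx
  obtain ⟨h, hh, y, hy, he⟩ := hτ _ ⟨1, H.one_mem, x, hx, (one_smul _ _).symm⟩
  rw [smul_map_subtype] at he
  obtain ⟨δ, hδ⟩ := hSne y hy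
  have hhδ : h δ ∈ h • y.map (Embedding.subtype (· ∈ Δ)) :=
    Finset.smul_mem_smul_finset (Finset.mem_map_of_mem _ hδ)
  have hhΔ : h ∈ stabilizer (Perm Ω) Δ := by
    refine smul_eq_of_mem_of_mem h𝔅 hh (ω := h δ) ?_ (Finset.smul_mem_smul_finset δ.2)
    obtain ⟨δ', -, hδ'⟩ := Finset.mem_map.1 (he ▸ hhδ)
    exact hδ' ▸ δ'.2
  rw [show h • y.map _ = _ from smul_map_subtype ⟨h, hhΔ⟩ y] at he
  rw [Finset.map_injective _ he]
  exact hKS (restrictHom_mem_inducedGroup hh hhΔ) y hy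

/-- The set meeting each block `γ = blockRep γ • Δ` in `blockRep γ • w` if `γ ∈ P`, and in the
complement of that in `γ` otherwise. -/
noncomputable def traceSet (h𝔅 : IsFinsetPartition (orbit H Δ)) (w : Finset Δ)
    (P : Finset (orbit H Δ)) : Finset Ω :=
  {ω | ((blockRep (blockOf h𝔅 ω) : Perm Ω)⁻¹ ω ∈ w.map (Embedding.subtype (· ∈ Δ)) ↔
    blockOf h𝔅 ω ∈ P)}

variable (h𝔅 : IsFinsetPartition (orbit H Δ))

lemma blockRep_apply_mem_traceSet_iff {w : Finset Δ} {P : Finset (orbit H Δ)} (γ : orbit H Δ)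
    (δ : Δ) : (blockRep γ : Perm Ω) δ ∈ traceSet h𝔅 w P ↔ (δ ∈ w ↔ γ ∈ P) := by
  simp [traceSet, blockOf_blockRep_apply]

lemma card_traceSet_inter (w : Finset Δ) (P : Finset (orbit H Δ)) (γ : orbit H Δ) :
    (traceSet h𝔅 w P ∩ γ).card = if γ ∈ P then w.card else Δ.card - w.card := by
  have hite : ∀ δ, δ ∈ (if γ ∈ P then w else wᶜ) ↔ (δ ∈ w ↔ γ ∈ P) := by
    intro δ
    split_ifs with h <;> simp [h]
  have : traceSet h𝔅 w P ∩ γ = (if γ ∈ P then w else wᶜ).map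
      ((Embedding.subtype _).trans (blockRep γ : Perm Ω).toEmbedding) := by
    ext ω
    constructor
    · rintro hω
      rw [Finset.mem_inter, ← blockRep_smul γ] at hω
      obtain ⟨δ, hδ, rfl⟩ := Finset.mem_smul_finset.1 hω.2
      exact Finset.mem_map.2 ⟨⟨δ, hδ⟩,
        (hite _).2 ((blockRep_apply_mem_traceSet_iff h𝔅 γ ⟨δ, hδ⟩).1 hω.1), rfl⟩
    · rintro hω
      obtain ⟨δ, hδ, rfl⟩ := Finset.mem_map.1 hω
      refine Finset.mem_inter.2
        ⟨(blockRep_apply_mem_traceSet_iff h𝔅 γ δ).2 ((hite δ).1 hδ), ?_⟩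
      rw [← blockRep_smul γ]
      exact Finset.smul_mem_smul_finset δ.2
  rw [this, Finset.card_map]
  split_ifs
  · rfl
  · rw [Finset.card_compl, Fintype.card_coe]

lemma traceSet_compl (w : Finset Δ) (P : Finset (orbit H Δ)) :
    traceSet h𝔅 w Pᶜ = (traceSet h𝔅 w P)ᶜ := by
  ext ω
  simp only [traceSet, Finset.mem_filter, Finset.mem_univ, true_and, Finset.mem_compl]
  tauto

lemma traceSet_notMem_range_blockUnion {w : Finset Δ} (hw : w ≠ ∅) (hw' : w ≠ Finset.univ)
    (P : Finset (orbit H Δ)) : traceSet h𝔅 w P ∉ Set.range (blockUnion h𝔅) := by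
  rintro ⟨t, ht⟩
  obtain ⟨δ, hδ⟩ := Finset.nonempty_iff_ne_empty.2 hw
  obtain ⟨δ', hδ'⟩ : ∃ δ', δ' ∉ w := by
    by_contra! h
    exact hw' (Finset.eq_univ_iff_forall.2 h)
  have h := blockRep_apply_mem_traceSet_iff h𝔅 (w := w) (P := P) ⟨Δ, mem_orbit_self Δ⟩
  have h₁ := h δ
  have h₂ := h δ'
  rw [← ht, mem_blockUnion, blockOf_blockRep_apply] at h₁ h₂
  tauto

lemma blockPerm_smul_eq {w : Finset Δ} (hw : 2 * w.card ≠ Δ.card) {P : Finset (orbit H Δ)}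
    {g : Perm Ω} (hg : g ∈ invGroup (orbit H Δ))
    (hgW : g • traceSet h𝔅 w P = traceSet h𝔅 w P) : blockPerm hg • P = P := by
  refine Finset.perm_smul_eq_self_of_forall fun γ => ?_
  have h := card_traceSet_inter h𝔅 w P (blockPerm hg γ)
  rw [coe_blockPerm_apply, ← hgW, ← Finset.smul_finset_inter, Finset.card_smul_finset,
    card_traceSet_inter] at h
  have : w.card ≤ Δ.card := by simpa using w.card_le_univ
  split_ifs at h <;> first | tauto | omega

/-- Conjugating by `blockRep γ` carries the action of `g` on the block `γ` to an element of
`K` fixing `w`. -/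
theorem eq_one_of_smul_traceSet_eq {S : Set (Finset Δ)} (hS : inducedGroup H Δ = invGroup S)
    (hSne : ∀ x ∈ S, x.Nonempty) {w : Finset Δ} (hw : IsRegularSet (inducedGroup H Δ) w)
    {P : Finset (orbit H Δ)} {g : Perm Ω} (hg : g ∈ invGroup (liftedTranslates H Δ S))
    (hblocks : ∀ γ : orbit H Δ, g • (γ : Finset Ω) = γ)
    (hgW : g • traceSet h𝔅 w P = traceSet h𝔅 w P) : g = 1 := by
  ext ω
  set γ := blockOf h𝔅 ω
  set c : Perm Ω := (blockRep γ : Perm Ω)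
  obtain ⟨δ, hδ⟩ : ∃ δ : Δ, c δ = ω := by
    have hω := mem_blockOf h𝔅 ω
    rw [← blockRep_smul] at hω
    obtain ⟨δ, hδ, e⟩ := Finset.mem_smul_finset.1 hω
    exact ⟨⟨δ, hδ⟩, e⟩
  have hτΔ : c⁻¹ * g * c ∈ stabilizer (Perm Ω) Δ := by
    change (c⁻¹ * g * c) • Δ = Δ
    rw [mul_smul, mul_smul, blockRep_smul, hblocks, ← blockRep_smul γ, inv_smul_smul]
  have hcS := le_invGroup_liftedTranslates S (blockRep γ).2
  have hσ : restrictHom Δ ⟨_, hτΔ⟩ = 1 := by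
    refine hw _ (hS ▸ restrictHom_mem_invGroup h𝔅 hSne hS.le
      (mul_mem (mul_mem (inv_mem hcS) hg) hcS)) (Finset.perm_smul_eq_self_of_forall fun δ' => ?_)
    have e : c (restrictHom Δ ⟨_, hτΔ⟩ δ') = g (c δ') := by
      simp [Perm.mul_apply]
    have h₁ := blockRep_apply_mem_traceSet_iff h𝔅 (w := w) (P := P) γ (restrictHom Δ ⟨_, hτΔ⟩ δ')
    have h₂ := blockRep_apply_mem_traceSet_iff h𝔅 (w := w) (P := P) γ δ'
    rw [← Finset.smul_mem_smul_finset_iff g, hgW] at h₂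
    change c _ ∈ _ ↔ _ at h₁
    rw [e] at h₁
    change g (c δ') ∈ _ ↔ _ at h₂
    tauto
  have := congrArg Subtype.val (Perm.ext_iff.1 hσ δ)
  rw [coe_restrictHom_apply, Perm.mul_apply, Perm.mul_apply, Perm.inv_eq_iff_eq] at this
  rw [← hδ, this, Perm.one_apply, Perm.one_apply]

end Construction

section Relation

variable {Ω : Type*} [Fintype Ω] [DecidableEq Ω] {H : Subgroup (Perm Ω)} {Δ : Finset Ω}
  (h𝔅 : IsFinsetPartition (orbit H Δ)) {S : Set (Finset Δ)} {RL : Set (Finset (orbit H Δ))}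

def blockRelation (S : Set (Finset Δ)) (RL : Set (Finset (orbit H Δ))) : Set (Finset Ω) :=
  blockPlusPoint (orbit H Δ) ∪ liftedTranslates H Δ S ∪ blockUnion h𝔅 '' RL

/-- The sizes of the members of `blockRelation` that are not unions of blocks. -/
def nonBlockUnionArity (d : ℕ) : Set ℕ := {c | c = d + 1 ∨ 2 ≤ c ∧ c + 2 ≤ d}

lemma le_invGroup_blockRelation (hΔ : Δ.Nonempty)
    (hRL : ∀ h : H, toPermHom H (orbit H Δ) h ∈ invGroup RL) :
    H ≤ invGroup (blockRelation h𝔅 S RL) := by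
  intro h hh
  refine inf_invGroup_le_invGroup_union _ _
    ⟨inf_invGroup_le_invGroup_union _ _ ⟨?_, le_invGroup_liftedTranslates S hh⟩, ?_⟩
  · rintro _ ⟨γ, hγ, p, hp, rfl⟩
    exact ⟨h • γ, le_invGroup_orbit hh γ hγ, h • p, (Finset.smul_mem_smul_finset_iff h).not.2 hp,
      Finset.smul_finset_insert _ _ _⟩
  · exact (mem_invGroup_image_blockUnion_iff h𝔅 (fun _ => nonempty_of_mem_orbit hΔ)
      (p := toPermHom _ _ ⟨h, hh⟩) fun γ => rfl).2 (hRL _)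

lemma dvd_card_of_mem_image_blockUnion {z : Finset Ω} (hz : z ∈ blockUnion h𝔅 '' RL) :
    Δ.card ∣ z.card := by
  obtain ⟨t, -, rfl⟩ := hz
  rw [card_blockUnion h𝔅 fun _ => card_of_mem_orbit]
  exact Dvd.intro_left _ rfl

lemma invGroup_le_invGroup_blockPlusPoint (hd : 2 ≤ Δ.card)
    (hScard : ∀ x ∈ S, 2 ≤ x.card ∧ x.card + 2 ≤ Δ.card) {X : Set (Finset Ω)}
    (hX : ∀ z ∈ X, z.card ≠ Δ.card + 1) :
    invGroup (blockRelation h𝔅 S RL ∪ X) ≤ invGroup (blockPlusPoint (orbit H Δ)) := by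
  refine invGroup_le_invGroup_of_arity (fun z hz => Or.inl (Or.inl (Or.inl hz))) ?_
  rintro z hz ⟨y, hy, hyz⟩
  have hz' : z.card = Δ.card + 1 :=
    hyz ▸ card_of_mem_blockPlusPoint (fun _ => card_of_mem_orbit) hy
  rcases hz with ((hz | hz) | hz) | hz
  · exact hz
  · obtain ⟨x, hx, hcx⟩ := card_of_mem_liftedTranslates hz
    have := hScard x hx
    omega
  · exact absurd (hz' ▸ dvd_card_of_mem_image_blockUnion h𝔅 hz) (Nat.not_dvd_self_add_one hd)
  · exact absurd hz' (hX z hz)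

lemma invGroup_le_invGroup_liftedTranslates
    (hScard : ∀ x ∈ S, 2 ≤ x.card ∧ x.card + 2 ≤ Δ.card) :
    invGroup (blockRelation h𝔅 S RL) ≤ invGroup (liftedTranslates H Δ S) := by
  refine invGroup_le_invGroup_of_arity (fun z hz => Or.inl (Or.inr hz)) ?_
  rintro z hz ⟨y, hy, hyz⟩
  obtain ⟨x, hx, hcx⟩ := card_of_mem_liftedTranslates hy
  have := hScard x hx
  rcases hz with (hz | hz) | hz
  · have := card_of_mem_blockPlusPoint (fun _ => card_of_mem_orbit) hz
    omega
  · exact hz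
  · have := Nat.eq_zero_of_dvd_of_lt (dvd_card_of_mem_image_blockUnion h𝔅 hz) (by omega)
    omega

lemma invGroup_le_invGroup_image_blockUnion (hd : 2 ≤ Δ.card)
    (hScard : ∀ x ∈ S, 2 ≤ x.card ∧ x.card + 2 ≤ Δ.card) :
    invGroup (blockRelation h𝔅 S RL) ≤ invGroup (blockUnion h𝔅 '' RL) := by
  refine invGroup_le_invGroup_of_arity (fun z hz => Or.inr hz) ?_
  rintro z hz ⟨y, hy, hyz⟩
  have hdvd := hyz ▸ dvd_card_of_mem_image_blockUnion h𝔅 hy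
  rcases hz with (hz | hz) | hz
  · rw [card_of_mem_blockPlusPoint (fun _ => card_of_mem_orbit) hz] at hdvd
    exact absurd hdvd (Nat.not_dvd_self_add_one hd)
  · obtain ⟨x, hx, hcx⟩ := card_of_mem_liftedTranslates hz
    have := hScard x hx
    have := Nat.eq_zero_of_dvd_of_lt hdvd (by omega)
    omega
  · exact hz

theorem isRegularSet_traceSet (hd : 3 ≤ Δ.card) (hn : Δ.card + 2 ≤ Fintype.card Ω)
    (hS : inducedGroup H Δ = invGroup S) (hScard : ∀ x ∈ S, 2 ≤ x.card ∧ x.card + 2 ≤ Δ.card)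
    {w : Finset Δ} (hw : IsRegularSet (inducedGroup H Δ) w) (hw2 : 2 * w.card ≠ Δ.card)
    {P : Finset (orbit H Δ)} (hP : IsRegularSet (invGroup RL) P) :
    IsRegularSet (invGroup (blockRelation h𝔅 S RL)) (traceSet h𝔅 w P) := by
  intro g hg hgW
  have hg𝔅 : g ∈ invGroup (orbit H Δ) :=
    invGroup_blockPlusPoint_le h𝔅 (fun _ => card_of_mem_orbit) hd hn
      (invGroup_le_invGroup_blockPlusPoint h𝔅 (by omega) hScard (X := ∅) (by simp)
        (by rwa [Set.union_empty]))
  have hpb : blockPerm hg𝔅 = 1 :=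
    hP _ ((mem_invGroup_image_blockUnion_iff h𝔅
      (fun _ => nonempty_of_mem_orbit (Finset.card_pos.1 (by omega))) (coe_blockPerm_apply hg𝔅)).1
        (invGroup_le_invGroup_image_blockUnion h𝔅 (by omega) hScard hg))
      (blockPerm_smul_eq h𝔅 hw2 hg𝔅 hgW)
  refine eq_one_of_smul_traceSet_eq h𝔅 hS
    (fun x hx => Finset.card_pos.1 (by have := hScard x hx; omega)) hw
    (invGroup_le_invGroup_liftedTranslates h𝔅 hScard hg) (fun γ => ?_) hgW
  rw [← coe_blockPerm_apply hg𝔅, hpb]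
  rfl

lemma exists_isRegularSet_card_traceSet_notMem (hd : 3 ≤ Δ.card) (hn : Δ.card < Fintype.card Ω)
    (w : Finset Δ) {P : Finset (orbit H Δ)} (hP : IsRegularSet (invGroup RL) P) :
    ∃ P₀, IsRegularSet (invGroup RL) P₀ ∧
      (traceSet h𝔅 w P₀).card ∉ nonBlockUnionArity Δ.card := by
  have hcompl : (traceSet h𝔅 w Pᶜ).card = Fintype.card Ω - (traceSet h𝔅 w P).card := by
    rw [traceSet_compl, Finset.card_compl]
  have hle := (traceSet h𝔅 w P).card_le_univ
  have hs := card_eq_two_mul_or_three_mul_le h𝔅 hn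
  by_cases hbad : (traceSet h𝔅 w P).card ∈ nonBlockUnionArity Δ.card
  · refine ⟨Pᶜ, hP.compl, ?_⟩
    simp only [nonBlockUnionArity, Set.mem_ofPred_eq, hcompl] at hbad ⊢
    omega
  · exact ⟨P, hP, hbad⟩

theorem eq_invGroup_blockRelation_union_orbit {G : Subgroup (Perm Ω)} (hG : G ≤ H)
    (hd : 3 ≤ Δ.card) (hn : Δ.card + 2 ≤ Fintype.card Ω)
    (hS : inducedGroup H Δ = invGroup S) (hScard : ∀ x ∈ S, 2 ≤ x.card ∧ x.card + 2 ≤ Δ.card)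
    {w : Finset Δ} (hw : IsRegularSet (inducedGroup H Δ) w) (hw2 : 2 * w.card ≠ Δ.card)
    (hw₀ : w ≠ ∅) (hw₁ : w ≠ Finset.univ)
    (hRL : ∀ h : H, toPermHom H (orbit H Δ) h ∈ invGroup RL)
    {P : Finset (orbit H Δ)} (hP : IsRegularSet (invGroup RL) P)
    (hWcard : (traceSet h𝔅 w P).card ∉ nonBlockUnionArity Δ.card) :
    G = invGroup (blockRelation h𝔅 S RL ∪ orbit G (traceSet h𝔅 w P)) := by
  refine eq_invGroup_union_orbit
    (P := {z | z.card ∈ nonBlockUnionArity Δ.card} ∪ Set.range (blockUnion h𝔅))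
    (hG.trans (le_invGroup_blockRelation h𝔅 (Finset.card_pos.1 (by omega)) hRL))
    (isRegularSet_traceSet h𝔅 hd hn hS hScard hw hw2 hP) ?_ ?_ fun g hg => ?_
  · rintro z ((hz | hz) | ⟨t, -, rfl⟩)
    · exact Or.inl (Or.inl (card_of_mem_blockPlusPoint (fun _ => card_of_mem_orbit) hz))
    · obtain ⟨x, hx, hcx⟩ := card_of_mem_liftedTranslates hz
      exact Or.inl (Or.inr (hcx ▸ hScard x hx))
    · exact Or.inr ⟨t, rfl⟩
  · rintro (h | h)
    exacts [hWcard h, traceSet_notMem_range_blockUnion h𝔅 hw₀ hw₁ P h]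
  · have hg𝔅 : g ∈ invGroup (orbit H Δ) :=
      invGroup_blockPlusPoint_le h𝔅 (fun _ => card_of_mem_orbit) hd hn
        (invGroup_le_invGroup_blockPlusPoint h𝔅 (by omega) hScard
          (by rintro _ ⟨a, rfl⟩ h; exact hWcard (Or.inl (by simpa using h))) hg)
    rintro z (hz | hz)
    · left
      change (g • z).card ∈ nonBlockUnionArity Δ.card
      rwa [Finset.card_smul_finset]
    · exact Or.inr (invGroup_le_invGroup_range_blockUnion h𝔅 hg𝔅 z hz)

end Relation

theorem subgroups_isRelationGroup_of_block_system_general {Ω : Type*} [Fintype Ω] [DecidableEq Ω]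
    (H : Subgroup (Equiv.Perm Ω))
    (htrans : MulAction.IsPretransitive ↥H Ω)
    (Δ : Finset Ω) (hblock : MulAction.IsBlock ↥H (↑Δ : Set Ω))
    (h1 : 1 < Δ.card) (h2 : Δ.card < Fintype.card Ω)
    (hKrel : IsRelationGroup (inducedGroup H Δ))
    (wΔ : Finset {x // x ∈ Δ}) (hwΔ : IsRegularSet (inducedGroup H Δ) wΔ)
    (hhalf : 2 * wΔ.card ≠ Δ.card)
    (L : Subgroup (Equiv.Perm ↥(MulAction.orbit ↥H Δ)))
    (hL : L = (MulAction.toPermHom ↥H ↥(MulAction.orbit ↥H Δ)).range)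
    (hLrel : IsRelationGroup L)
    (hLreg : ∃ wΓ : Finset ↥(MulAction.orbit ↥H Δ), IsRegularSet L wΓ)
    (G : Subgroup (Equiv.Perm Ω)) (hG : G ≤ H) :
    IsRelationGroup G := by
  have h𝔅 := isFinsetPartition_orbit htrans hblock (Finset.card_pos.1 (by omega))
  obtain ⟨RK, hRK⟩ := hKrel
  obtain ⟨RL, rfl⟩ := hLrel
  obtain ⟨wΓ, hwΓ⟩ := hLreg
  have hKtrans := exists_mem_inducedGroup_apply_eq h𝔅 htrans
  have hKne := ne_bot_of_forall_exists_apply_eq hKtrans (by rwa [Fintype.card_coe])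
  have hS : inducedGroup H Δ = invGroup {x ∈ RK | 2 ≤ x.card ∧ x.card + 2 ≤ Δ.card} := by
    rw [hRK, ← invGroup_sep_card_eq_invGroup (hRK ▸ hKtrans), Fintype.card_coe]
  have hw₀ := hwΔ.ne_empty hKne
  have hw₁ := hwΔ.ne_univ hKne
  have hd : 3 ≤ Δ.card := by
    have := Finset.card_pos.2 (Finset.nonempty_iff_ne_empty.2 hw₀)
    have := Finset.card_lt_card (Finset.ssubset_univ_iff.2 hw₁)
    rw [Finset.card_univ, Fintype.card_coe] at this
    omega
  have hn : Δ.card + 2 ≤ Fintype.card Ω := by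
    have := card_eq_two_mul_or_three_mul_le h𝔅 h2
    omega
  obtain ⟨P, hP, hPcard⟩ := exists_isRegularSet_card_traceSet_notMem h𝔅 hd h2 wΔ hwΓ
  exact ⟨_, eq_invGroup_blockRelation_union_orbit h𝔅 hG hd hn hS (fun x hx => hx.2) hwΔ hhalf
    hw₀ hw₁ (fun h => hL ▸ ⟨h, rfl⟩) hP hPcard⟩

/-- Theorem 6.3: let `H` be imprimitive on `Ω` with minimal block of
imprimitivity `Δ`, let `K = H^Δ_Δ` and let `L` be the group induced by `H` on
the system of blocks `{Δ^h : h ∈ H}` (the orbit of `Δ`).  If `K` is a relation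
group with a regular set of size `r_Δ`, `2 r_Δ ≠ |Δ|`, and `L` is a relation
group with a regular set, then every subgroup of `H` is a relation group. -/
theorem subgroups_isRelationGroup_of_block_system {Ω : Type*} [Fintype Ω] [DecidableEq Ω]
    (H : Subgroup (Equiv.Perm Ω))
    (htrans : MulAction.IsPretransitive ↥H Ω) (himpr : ¬ IsPrimitivePermGroup H)
    (Δ : Finset Ω) (hblock : MulAction.IsBlock ↥H (↑Δ : Set Ω))
    (h1 : 1 < Δ.card) (h2 : Δ.card < Fintype.card Ω)
    (hmin : ∀ B : Finset Ω, MulAction.IsBlock ↥H (↑B : Set Ω) → B ⊆ Δ → B ≠ Δ →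
      B.card ≤ 1)
    (hKrel : IsRelationGroup (inducedGroup H Δ))
    (wΔ : Finset {x // x ∈ Δ}) (hwΔ : IsRegularSet (inducedGroup H Δ) wΔ)
    (hhalf : 2 * wΔ.card ≠ Δ.card)
    (L : Subgroup (Equiv.Perm ↥(MulAction.orbit ↥H Δ)))
    (hL : L = (MulAction.toPermHom ↥H ↥(MulAction.orbit ↥H Δ)).range)
    (hLrel : IsRelationGroup L)
    (hLreg : ∃ wΓ : Finset ↥(MulAction.orbit ↥H Δ), IsRegularSet L wΓ)
    (G : Subgroup (Equiv.Perm Ω)) (hG : G ≤ H) :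
    IsRelationGroup G :=
  subgroups_isRelationGroup_of_block_system_general H htrans Δ hblock h1 h2 hKrel wΔ hwΔ hhalf L hL
    hLrel hLreg G hG
end

section
/- Let Δ be a finite set of size d and let K = G(R^Δ) be a primitive permutation group on Δ, where R^Δ is a nonempty unordered relation on Δ all of whose members y satisfy 2 ≤ |y| ≤ d − 2. Let Σ be a finite set of size s ≥ 1, and for each i ∈ Σ let R^{Δ_i} = {y × {i} : y ∈ R^Δ} be the copy of R^Δ on the fiber Δ × {i} ⊆ Δ × Σ. Then the invariance group of the relation R = ⋃_{i ∈ Σ} R^{Δ_i} on Δ × Σ equals the imprimitive wreath product K ≀ Sym(Σ); that is, G(R) = K ≀ Sym(Σ). -/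
open Pointwise MulAction

/-- The imprimitive wreath product `K ≀ L` as a subgroup of `Sym (Δ × Γ)`:
all permutations `g` of `Δ × Γ` of the form `g (δ, i) = (k_i δ, σ i)`
with `σ ∈ L` and each `k_i ∈ K`. -/
def wreathProduct {Δ Γ : Type*} (K : Subgroup (Equiv.Perm Δ)) (L : Subgroup (Equiv.Perm Γ)) :
    Subgroup (Equiv.Perm (Δ × Γ)) where
  carrier := {g | ∃ σ ∈ L, ∃ k : Γ → Equiv.Perm Δ, (∀ i, k i ∈ K) ∧
      ∀ p : Δ × Γ, g p = (k p.2 p.1, σ p.2)}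
  one_mem' := ⟨1, L.one_mem, fun _ => 1, fun _ => K.one_mem, fun _ => rfl⟩
  mul_mem' := by
    rintro a b ⟨σa, hσa, ka, hka, ha⟩ ⟨σb, hσb, kb, hkb, hb⟩
    refine ⟨σa * σb, L.mul_mem hσa hσb, fun i => ka (σb i) * kb i,
      fun i => K.mul_mem (hka _) (hkb _), fun p => ?_⟩
    have : (a * b) p = a (b p) := rfl
    rw [this, hb p, ha]
    rfl
  inv_mem' := by
    rintro g ⟨σ, hσ, k, hk, hg⟩
    refine ⟨σ⁻¹, L.inv_mem hσ, fun i => (k (σ⁻¹ i))⁻¹, fun i => K.inv_mem (hk _), fun p => ?_⟩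
    apply g.injective
    rw [show g (g⁻¹ p) = p from by simp, hg]
    simp

/-!
Primitivity of `K = G(RΔ)` makes the hypergraph with hyperedges `RΔ` connected: the connected
component of a point is a block of `K`, and it is not a singleton because some hyperedge has two
points. Hence the connected components of the fibre copies on `Δ × Γ` are exactly the fibres
`Δ × {i}`. A permutation preserving the copies preserves their components, so it permutes the
fibres by some `σ` and acts on the fibre `i` by some `kᵢ`, which must preserve `RΔ`, i.e. lie
in `K`. Conversely, elements of `K ≀ Sym(Γ)` visibly map copies to copies.
-/

open Relation

section HyperAdj

variable {Ω : Type*} {R : Set (Finset Ω)}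

def HyperAdj (R : Set (Finset Ω)) (u v : Ω) : Prop := ∃ y ∈ R, u ∈ y ∧ v ∈ y

instance : Std.Symm (HyperAdj R) where
  symm _ _ := fun ⟨y, hy, hu, hv⟩ => ⟨y, hy, hv, hu⟩

variable [Fintype Ω] [DecidableEq Ω] {g : Equiv.Perm Ω}

lemma HyperAdj.apply_of_mem_invGroup (hg : g ∈ invGroup R) {u v : Ω} :
    HyperAdj R u v → HyperAdj R (g u) (g v) := fun ⟨y, hy, hu, hv⟩ =>
  ⟨g • y, hg y hy, Finset.smul_mem_smul_finset hu, Finset.smul_mem_smul_finset hv⟩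

lemma reflTransGen_hyperAdj_apply_of_mem_invGroup (hg : g ∈ invGroup R) {u v : Ω}
    (h : ReflTransGen (HyperAdj R) u v) : ReflTransGen (HyperAdj R) (g u) (g v) :=
  h.lift g fun _ _ => HyperAdj.apply_of_mem_invGroup hg

lemma smul_setOf_reflTransGen_hyperAdj (hg : g ∈ invGroup R) (a : Ω) :
    g • {x | ReflTransGen (HyperAdj R) a x} = {x | ReflTransGen (HyperAdj R) (g a) x} := by
  ext x
  refine ⟨?_, fun hx => ⟨g⁻¹ x, ?_, by simp [Equiv.Perm.smul_def]⟩⟩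
  · rintro ⟨b, hb, rfl⟩
    exact reflTransGen_hyperAdj_apply_of_mem_invGroup hg hb
  · simpa using reflTransGen_hyperAdj_apply_of_mem_invGroup ((invGroup R).inv_mem hg) hx

lemma isBlock_setOf_reflTransGen_hyperAdj (a : Ω) :
    IsBlock (invGroup R) {x | ReflTransGen (HyperAdj R) a x} := by
  rw [isBlock_iff_smul_eq_or_disjoint]
  intro g
  rw [Subgroup.smul_def, smul_setOf_reflTransGen_hyperAdj g.2]
  by_cases h : ReflTransGen (HyperAdj R) a ((g : Equiv.Perm Ω) a)
  · left
    ext x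
    exact ⟨h.trans, (symm h).trans⟩
  · right
    exact Set.disjoint_left.mpr fun x hx hx' => h (hx'.trans (symm hx))

lemma reflTransGen_hyperAdj_of_isPrimitivePermGroup (hprim : IsPrimitivePermGroup (invGroup R))
    {y : Finset Ω} (hy : y ∈ R) (hcard : 1 < y.card) (a b : Ω) :
    ReflTransGen (HyperAdj R) a b := by
  obtain ⟨u, hu, v, hv, huv⟩ := Finset.one_lt_card.mp hcard
  have hy_sub : ∀ w ∈ y, ReflTransGen (HyperAdj R) u w := fun w hw =>
    .single ⟨y, hy, hu, hw⟩
  have huniv : {x | ReflTransGen (HyperAdj R) u x} = Set.univ :=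
    (hprim.2 _ (isBlock_setOf_reflTransGen_hyperAdj u)).resolve_left
      fun hsub => huv (hsub (hy_sub u hu) (hy_sub v hv))
  have hconn : ∀ x, ReflTransGen (HyperAdj R) u x := Set.eq_univ_iff_forall.mp huniv
  exact (symm (hconn a)).trans (hconn b)

end HyperAdj

lemma Equiv.Perm.exists_apply_eq_of_snd_apply_eq {Δ Γ : Type*} [Finite Δ] [Finite Γ]
    (g : Equiv.Perm (Δ × Γ)) (hg : ∀ p q : Δ × Γ, p.2 = q.2 → (g p).2 = (g q).2) :
    ∃ σ : Equiv.Perm Γ, ∃ k : Γ → Equiv.Perm Δ, ∀ p, g p = (k p.2 p.1, σ p.2) := by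
  rcases isEmpty_or_nonempty Δ with hΔ | ⟨⟨δ₀⟩⟩
  · exact ⟨1, fun _ => 1, fun p => isEmptyElim p.1⟩
  have hσ : Function.Surjective fun i => (g (δ₀, i)).2 := fun j =>
    ⟨(g⁻¹ (δ₀, j)).2, (hg (δ₀, _) (g⁻¹ (δ₀, j)) rfl).trans (by simp)⟩
  have hk (i : Γ) : Function.Injective fun δ => (g (δ, i)).1 := fun δ δ' h => by
    simpa using g.injective (Prod.ext h (hg _ _ rfl))
  exact ⟨Equiv.ofBijective _ hσ.bijective_of_finite,
    fun i => Equiv.ofBijective _ (hk i).bijective_of_finite, fun p => Prod.ext rfl (hg _ _ rfl)⟩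

section FiberCopies

variable {Δ Γ : Type*} {RΔ : Set (Finset Δ)}

def fiberCopies (RΔ : Set (Finset Δ)) (Γ : Type*) : Set (Finset (Δ × Γ)) :=
  {x | ∃ i : Γ, ∃ y ∈ RΔ, x = y ×ˢ ({i} : Finset Γ)}

lemma hyperAdj_fiberCopies_iff {p q : Δ × Γ} :
    HyperAdj (fiberCopies RΔ Γ) p q ↔ HyperAdj RΔ p.1 q.1 ∧ p.2 = q.2 := by
  constructor
  · rintro ⟨_, ⟨i, y, hy, rfl⟩, hp, hq⟩
    rw [Finset.mem_product, Finset.mem_singleton] at hp hq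
    exact ⟨⟨y, hy, hp.1, hq.1⟩, hp.2.trans hq.2.symm⟩
  · rintro ⟨⟨y, hy, hp, hq⟩, h⟩
    exact ⟨y ×ˢ {p.2}, ⟨p.2, y, hy, rfl⟩, by simp [hp], by simp [hq, h]⟩

lemma reflTransGen_hyperAdj_fiberCopies_iff (hconn : ∀ a b, ReflTransGen (HyperAdj RΔ) a b)
    {p q : Δ × Γ} : ReflTransGen (HyperAdj (fiberCopies RΔ Γ)) p q ↔ p.2 = q.2 := by
  refine ⟨fun h => ?_, fun h => ?_⟩
  · induction h with
    | refl => rfl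
    | tail _ hstep ih => exact ih.trans (hyperAdj_fiberCopies_iff.mp hstep).2
  · obtain ⟨δ, i⟩ := p
    obtain ⟨δ', j⟩ := q
    obtain rfl : i = j := h
    exact (hconn δ δ').lift (·, i) fun _ _ hadj => hyperAdj_fiberCopies_iff.mpr ⟨hadj, rfl⟩

variable [DecidableEq Δ] [DecidableEq Γ]

lemma smul_product_singleton_of_apply_eq {g : Equiv.Perm (Δ × Γ)} {σ : Equiv.Perm Γ}
    {k : Γ → Equiv.Perm Δ} (hg : ∀ p, g p = (k p.2 p.1, σ p.2)) (y : Finset Δ) (i : Γ) :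
    g • (y ×ˢ ({i} : Finset Γ)) = (k i • y) ×ˢ ({σ i} : Finset Γ) := by
  ext ⟨δ, j⟩
  simp only [Finset.mem_smul_finset, Finset.mem_product, Finset.mem_singleton,
    Equiv.Perm.smul_def, hg, Prod.exists, Prod.mk.injEq]
  grind

variable [Fintype Δ] [Fintype Γ]

lemma wreathProduct_le_invGroup_fiberCopies (L : Subgroup (Equiv.Perm Γ)) :
    wreathProduct (invGroup RΔ) L ≤ invGroup (fiberCopies RΔ Γ) := by
  rintro g ⟨σ, -, k, hk, hg⟩ _ ⟨i, y, hy, rfl⟩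
  exact ⟨σ i, k i • y, hk i y hy, smul_product_singleton_of_apply_eq hg y i⟩

lemma invGroup_fiberCopies_le_wreathProduct (hconn : ∀ a b, ReflTransGen (HyperAdj RΔ) a b) :
    invGroup (fiberCopies RΔ Γ) ≤ wreathProduct (invGroup RΔ) ⊤ := by
  intro g hg
  obtain ⟨σ, k, hgk⟩ := g.exists_apply_eq_of_snd_apply_eq fun p q h => by
    rw [← reflTransGen_hyperAdj_fiberCopies_iff hconn] at h ⊢
    exact reflTransGen_hyperAdj_apply_of_mem_invGroup hg h
  refine ⟨σ, trivial, k, fun i y hy => ?_, hgk⟩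
  obtain ⟨j, y', hy', heq⟩ := hg _ ⟨i, y, hy, rfl⟩
  rw [smul_product_singleton_of_apply_eq hgk] at heq
  have hky : k i • y = y' := by
    simpa only [Finset.product_image_fst (Finset.singleton_nonempty _)] using
      congrArg (Finset.image Prod.fst) heq
  exact hky ▸ hy'

end FiberCopies

theorem invGroup_fiber_copies_eq_wreathProduct_general {Δ Γ : Type*}
    [Fintype Δ] [DecidableEq Δ] [Fintype Γ] [DecidableEq Γ]
    (K : Subgroup (Equiv.Perm Δ)) (RΔ : Set (Finset Δ)) (hne : RΔ.Nonempty)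
    (hsize : ∀ y ∈ RΔ, 2 ≤ y.card ∧ y.card ≤ Fintype.card Δ - 2)
    (hK : K = invGroup RΔ) (hprim : IsPrimitivePermGroup K) :
    invGroup {x : Finset (Δ × Γ) | ∃ i : Γ, ∃ y ∈ RΔ, x = y ×ˢ ({i} : Finset Γ)} =
      wreathProduct K ⊤ := by
  subst hK
  obtain ⟨y, hy⟩ := hne
  have hconn := reflTransGen_hyperAdj_of_isPrimitivePermGroup hprim hy (hsize y hy).1
  exact le_antisymm (invGroup_fiberCopies_le_wreathProduct hconn)
    (wreathProduct_le_invGroup_fiberCopies ⊤)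

/-- Let `K = G(RΔ)` be a primitive group on `Δ`, where the nonempty relation
`RΔ` has all members of size between `2` and `|Δ| - 2`, and let `Γ` be nonempty.
Then the invariance group of the relation on `Δ × Γ` consisting of the copies
`y × {i}` (`y ∈ RΔ`, `i ∈ Γ`) of the members of `RΔ` on the fibers is exactly
the imprimitive wreath product `K ≀ Sym(Γ)`. -/
theorem invGroup_fiber_copies_eq_wreathProduct {Δ Γ : Type*}
    [Fintype Δ] [DecidableEq Δ] [Fintype Γ] [DecidableEq Γ]
    (K : Subgroup (Equiv.Perm Δ)) (RΔ : Set (Finset Δ)) (hne : RΔ.Nonempty)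
    (hsize : ∀ y ∈ RΔ, 2 ≤ y.card ∧ y.card ≤ Fintype.card Δ - 2)
    (hK : K = invGroup RΔ) (hprim : IsPrimitivePermGroup K)
    (hΓ : 1 ≤ Fintype.card Γ) :
    invGroup {x : Finset (Δ × Γ) | ∃ i : Γ, ∃ y ∈ RΔ, x = y ×ˢ ({i} : Finset Γ)} =
      wreathProduct K ⊤ :=
  invGroup_fiber_copies_eq_wreathProduct_general K RΔ hne hsize hK hprim
end
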